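/- arXiv:2210.08293 — 3 statements merged into one kernel-verified Lean document; each statement's English description precedes it below -/
import Mathlib

section
/- For any positive integers q and n, and any n×n integer matrix M satisfying M·1 = Mᵀ·1 (i.e., the vector of row sums of M equals the vector of column sums of M), there exists a q-dimensional tensor C with all modes of size n and integer entries such that for every pair of indices i₁ < i₂ in {1,…,q}, the matrix obtained by summing the entries of C over all modes other than i₁ and i₂ (with i₁ indexing the rows and i₂ the columns) equals M. -/
/-!
Write `M = diagonal r + Z` with `r` the row sums of `M`; since row and column sums of `M`
agree, every row and column of `Z` sums to zero. The tensor carrying `r c` at the constant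
point `(c, …, c)` projects to `diagonal r` on every pair of modes. For each pair `i < j`, copy
`Z` onto the plane of modes `i, j` through a fixed point `(z, …, z)`: this projects to `Z` on
`(i, j)`, and to `0` on any other pair `(i₁, i₂)`, because one of `i, j` is then summed out,
which produces a column or row sum of `Z`.
-/

open Finset Function Matrix

namespace Crystal

variable {ι α R : Type*} [Fintype ι] [Fintype α] [DecidableEq α]

section DecidableEq

variable [DecidableEq ι] [AddCommMonoid R]

def projection (i j : ι) : ((ι → α) → R) →+ Matrix α α R where
  toFun C := of fun a b => ∑ x, if x i = a ∧ x j = b then C x else 0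
  map_zero' := by ext; simp
  map_add' C D := by ext; simp [ite_add_zero, sum_add_distrib]

theorem projection_single (i j : ι) (y : ι → α) (v : R) :
    projection i j (Pi.single y v) = single (y i) (y j) v := by
  ext a b
  rw [projection, AddMonoidHom.coe_mk, ZeroHom.coe_mk, of_apply,
    Fintype.sum_eq_single y fun x hx => by simp [hx]]
  simp [single_apply]

def diagonalTensor (r : α → R) : (ι → α) → R :=
  ∑ c, Pi.single (const ι c) (r c)

theorem projection_diagonalTensor (i j : ι) (r : α → R) :
    projection i j (diagonalTensor r) = diagonal r := by
  simp only [diagonalTensor, map_sum, projection_single, const_apply, sum_single_eq_diagonal]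

def planeTensor (z : α) (i j : ι) (Z : Matrix α α R) : (ι → α) → R :=
  ∑ s, ∑ t, Pi.single (update (update (const ι z) i s) j t) (Z s t)

theorem projection_planeTensor_self (z : α) {i j : ι} (hij : i ≠ j) (Z : Matrix α α R) :
    projection i j (planeTensor z i j Z) = Z := by
  simp only [planeTensor, map_sum, projection_single, update_self, update_of_ne hij]
  exact (matrix_eq_sum_single Z).symm

theorem projection_planeTensor_eq_zero_of_ne_fst (z : α) {i j i₁ i₂ : ι} (hij : i ≠ j)
    (hi₁ : i₁ ≠ i) (hi₂ : i₂ ≠ i) (Z : Matrix α α R) (hZ : ∀ t, ∑ s, Z s t = 0) :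
    projection i₁ i₂ (planeTensor z i j Z) = 0 := by
  simp only [planeTensor, map_sum, projection_single, update_comm hij, update_of_ne hi₁,
    update_of_ne hi₂]
  rw [sum_comm]
  simp only [← singleAddMonoidHom_apply, ← map_sum, hZ, map_zero, sum_const_zero]

theorem projection_planeTensor_eq_zero_of_ne_snd (z : α) {i j i₁ i₂ : ι}
    (hi₁ : i₁ ≠ j) (hi₂ : i₂ ≠ j) (Z : Matrix α α R) (hZ : ∀ s, ∑ t, Z s t = 0) :
    projection i₁ i₂ (planeTensor z i j Z) = 0 := by
  simp only [planeTensor, map_sum, projection_single, update_of_ne hi₁, update_of_ne hi₂]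
  simp only [← singleAddMonoidHom_apply, ← map_sum, hZ, map_zero, sum_const_zero]

end DecidableEq

variable [LinearOrder ι]

theorem projection_planeTensor_eq_zero [AddCommMonoid R] (z : α)
    {i j i₁ i₂ : ι} (hij : i < j) (h₁₂ : i₁ < i₂) (hne : (i, j) ≠ (i₁, i₂))
    (Z : Matrix α α R) (hrow : ∀ s, ∑ t, Z s t = 0) (hcol : ∀ t, ∑ s, Z s t = 0) :
    projection i₁ i₂ (planeTensor z i j Z) = 0 := by
  by_cases hi : i₁ ≠ i ∧ i₂ ≠ i
  · exact projection_planeTensor_eq_zero_of_ne_fst z hij.ne hi.1 hi.2 Z hcol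
  · have hj : i₁ ≠ j ∧ i₂ ≠ j := by grind
    exact projection_planeTensor_eq_zero_of_ne_snd z hj.1 hj.2 Z hrow

theorem exists_projection_eq [Nonempty α] [AddCommGroup R]
    (M : Matrix α α R) (hM : ∀ a, ∑ b, M a b = ∑ b, M b a) :
    ∃ C : (ι → α) → R, ∀ i j, i < j → projection i j C = M := by
  obtain ⟨z⟩ := ‹Nonempty α›
  set r : α → R := fun a => ∑ b, M a b
  set Z := M - diagonal r
  have hrow : ∀ s, ∑ t, Z s t = 0 := by
    simp [Z, r, Matrix.sub_apply, diagonal_apply, sum_sub_distrib]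
  have hcol : ∀ t, ∑ s, Z s t = 0 := by
    simp [Z, r, Matrix.sub_apply, diagonal_apply, sum_sub_distrib, hM]
  refine ⟨diagonalTensor r + ∑ p ∈ univ.filter (fun p : ι × ι => p.1 < p.2),
    planeTensor z p.1 p.2 Z, fun i j hij => ?_⟩
  rw [map_add, map_sum, projection_diagonalTensor, sum_eq_single_of_mem (i, j) (by simpa),
    projection_planeTensor_self z hij.ne, add_sub_cancel]
  rintro ⟨k, l⟩ hkl hne
  exact projection_planeTensor_eq_zero z (by simpa using hkl) hij hne Z hrow hcol

end Crystal

theorem crystals_exist_general (q n : ℕ) (hn : 0 < n)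
    (M : Matrix (Fin n) (Fin n) ℤ)
    (hM : ∀ a : Fin n, (∑ b, M a b) = ∑ b, M b a) :
    ∃ C : (Fin q → Fin n) → ℤ,
      ∀ i₁ i₂ : Fin q, i₁ < i₂ → ∀ a b : Fin n,
        (∑ x : Fin q → Fin n, if x i₁ = a ∧ x i₂ = b then C x else 0) = M a b := by
  have : Nonempty (Fin n) := ⟨⟨0, hn⟩⟩
  obtain ⟨C, hC⟩ := Crystal.exists_projection_eq (ι := Fin q) M hM
  exact ⟨C, fun i₁ i₂ h a b => congrFun (congrFun (hC i₁ i₂ h) a) b⟩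

/-- Theorem: for any `n × n` integer matrix `M` whose row sums equal its column sums,
and any positive dimension `q`, there is a `q`-dimensional `M`-crystal: a tensor
`C : [n]^q → ℤ` whose projection onto every increasing pair of modes equals `M`. -/
theorem crystals_exist (q n : ℕ) (hq : 0 < q) (hn : 0 < n)
    (M : Matrix (Fin n) (Fin n) ℤ)
    (hM : ∀ a : Fin n, (∑ b, M a b) = ∑ b, M b a) :
    ∃ C : (Fin q → Fin n) → ℤ,
      ∀ i₁ i₂ : Fin q, i₁ < i₂ → ∀ a b : Fin n,
        (∑ x : Fin q → Fin n, if x i₁ = a ∧ x i₂ = b then C x else 0) = M a b :=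
  crystals_exist_general q n hn M hM
end

section
/- Let p, q be positive integers and n ∈ ℕ^q. Every realistic (p, n)-album of pictures is realisable: if a family of integer tensors {C_i}, indexed by strictly increasing p-tuples i in [q], satisfies the compatibility condition that for all increasing tuples i, j of length p and increasing (p−1)-tuples r, s in [p] with i∘r = j∘s the projection of C_i onto r equals the projection of C_j onto s, then there exists an integer tensor T : [n₁]×…×[n_q] → ℤ such that the projection of T onto each increasing p-tuple i equals C_i. -/
/-- An album of pictures is *realistic* if any two pictures agree on overlapping
projections: for increasing `p`-tuples `i, j` and increasing `(p-1)`-tuples `r, s`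
with `i ∘ r = j ∘ s`, the projection of `album i` onto `r` equals the projection of
`album j` onto `s` (entries compared via their values in `ℕ`, since the shapes agree). -/
def RealisticAlbum (p q : ℕ) (n : Fin q → ℕ)
    (album : (i : Fin p → Fin q) → ((∀ k : Fin p, Fin (n (i k))) → ℤ)) : Prop :=
  ∀ (i j : Fin p → Fin q), StrictMono i → StrictMono j →
    ∀ (r s : Fin (p - 1) → Fin p), StrictMono r → StrictMono s →
    (∀ k, i (r k) = j (s k)) →
    ∀ a : ∀ k : Fin (p - 1), Fin (n (i (r k))),
      (∑ b : ∀ k : Fin p, Fin (n (i k)),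
          if ∀ k, b (r k) = a k then album i b else 0)
      = ∑ c : ∀ k : Fin p, Fin (n (j k)),
          if ∀ k, ((c (s k) : ℕ) = (a k : ℕ)) then album j c else 0

/-- An album is *realisable* if it consists of the projections of a single tensor. -/
def RealisableAlbum (p q : ℕ) (n : Fin q → ℕ)
    (album : (i : Fin p → Fin q) → ((∀ k : Fin p, Fin (n (i k))) → ℤ)) : Prop :=
  ∃ T : (∀ j : Fin q, Fin (n j)) → ℤ,
    ∀ i : Fin p → Fin q, StrictMono i →
      ∀ a : ∀ k : Fin p, Fin (n (i k)),
        album i a = ∑ b : ∀ j : Fin q, Fin (n j),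
          if ∀ k, b (i k) = a k then T b else 0

section RealisableAux
open Finset
variable {q : ℕ} {n : Fin q → ℕ} {p : ℕ}

/-- Abel-summation / Pascal step for alternating binomial sums. -/
lemma abel_step (w : ℕ) (g : ℕ → ℤ) :
    ∑ m ∈ range (w+2), (-1:ℤ)^m * ((w+1).choose m) * g m
      = ∑ m ∈ range (w+1), (-1:ℤ)^m * (w.choose m) * (g m - g (m+1)) := by
  rw [Finset.sum_range_succ' (fun m => (-1:ℤ)^m * ((w+1).choose m) * g m) (w+1)]
  have h1 : ∀ m, ((w+1).choose (m+1) : ℤ) = (w.choose m : ℤ) + (w.choose (m+1) : ℤ) := by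
    intro m; exact_mod_cast congrArg (Nat.cast (R := ℤ)) (Nat.choose_succ_succ w m)
  have h2 : ∑ m ∈ range (w+1), (-1:ℤ)^(m+1) * ((w+1).choose (m+1)) * g (m+1)
      = (∑ m ∈ range (w+1), (-1:ℤ)^(m+1) * (w.choose m) * g (m+1))
        + ∑ m ∈ range (w+1), (-1:ℤ)^(m+1) * (w.choose (m+1)) * g (m+1) := by
    rw [← Finset.sum_add_distrib]
    refine Finset.sum_congr rfl fun m _ => ?_
    rw [h1]; ring
  have h3 : ∑ m ∈ range (w+1), (-1:ℤ)^(m+1) * (w.choose (m+1)) * g (m+1)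
      = (∑ m ∈ range (w+2), (-1:ℤ)^m * (w.choose m) * g m) - g 0 := by
    rw [Finset.sum_range_succ' (fun m => (-1:ℤ)^m * (w.choose m) * g m) (w+1)]
    simp
  have h4 : ∑ m ∈ range (w+2), (-1:ℤ)^m * (w.choose m) * g m
      = ∑ m ∈ range (w+1), (-1:ℤ)^m * (w.choose m) * g m := by
    rw [Finset.sum_range_succ]
    simp [Nat.choose_eq_zero_of_lt (Nat.lt_succ_self w)]
  rw [h2, h3, h4]
  simp only [mul_sub]
  rw [Finset.sum_sub_distrib]
  have h5 : ∀ m, (-1:ℤ)^(m+1) * (w.choose m) * g (m+1) = -((-1:ℤ)^m * (w.choose m) * g (m+1)) := by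
    intro m; ring
  simp only [h5]
  simp [Finset.sum_neg_distrib]
  ring

lemma key_binom : ∀ w, 1 ≤ w → ∀ b : ℕ,
    ∑ m ∈ range (w+1), (-1:ℤ)^m * (w.choose m) * ((b+m).choose (w-1)) = 0 := by
  intro w
  induction w with
  | zero => omega
  | succ w ih =>
    intro _ b
    rcases Nat.eq_zero_or_pos w with hw | hw
    · subst hw
      simp [Finset.sum_range_succ]
    · have hw1 : w - 1 + 1 = w := Nat.succ_pred_eq_of_pos hw
      have : ∑ m ∈ range (w+2), (-1:ℤ)^m * ((w+1).choose m) * ((b+m).choose w)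
          = ∑ m ∈ range (w+1), (-1:ℤ)^m * (w.choose m) *
              (((b+m).choose w : ℤ) - ((b+(m+1)).choose w : ℤ)) :=
        abel_step w (fun m => ((b+m).choose w : ℤ))
      rw [show w + 1 + 1 = w + 2 from rfl, Nat.add_sub_cancel, this]
      have hdif : ∀ m, ((b+m).choose w : ℤ) - ((b+(m+1)).choose w : ℤ)
          = -(((b+m).choose (w-1) : ℤ)) := by
        intro m
        have : (b+(m+1)).choose w = (b+m).choose (w-1) + (b+m).choose w := by
          have h := Nat.choose_succ_succ (b+m) (w-1)
          simp only [Nat.succ_eq_add_one, hw1] at h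
          rw [show b+(m+1) = (b+m)+1 from rfl, h]
        rw [this]; push_cast; ring
      have : ∑ m ∈ range (w+1), (-1:ℤ)^m * (w.choose m) *
              (((b+m).choose w : ℤ) - ((b+(m+1)).choose w : ℤ))
          = -∑ m ∈ range (w+1), (-1:ℤ)^m * (w.choose m) * ((b+m).choose (w-1)) := by
        rw [← Finset.sum_neg_distrib]
        refine Finset.sum_congr rfl fun m _ => ?_
        rw [hdif]; ring
      rw [this, ih hw b, neg_zero]

def coefc (w k : ℕ) : ℤ :=
  if w = 0 then (if k = 0 then 1 else 0)
  else if k = 0 then 0 else (-1:ℤ)^(k+w) * ((k-1).choose (w-1) : ℤ)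

lemma coefc_ne_zero {w k : ℕ} (h : coefc w k ≠ 0) : w ≤ k := by
  by_contra hlt
  push_neg at hlt
  apply h
  unfold coefc
  rcases Nat.eq_zero_or_pos w with hw | hw
  · omega
  · rw [if_neg (by omega)]
    rcases Nat.eq_zero_or_pos k with hk | hk
    · rw [if_pos hk]
    · rw [if_neg (by omega), Nat.choose_eq_zero_of_lt (by omega)]
      simp

lemma coefc_e0 (w : ℕ) :
    ∑ m ∈ range (w+1), (w.choose m : ℤ) * coefc w m = 1 := by
  rw [Finset.sum_eq_single w]
  · rcases Nat.eq_zero_or_pos w with hw | hw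
    · subst hw; simp [coefc]
    · unfold coefc
      rw [if_neg (by omega), if_neg (by omega)]
      rw [Nat.choose_self, Nat.choose_self]
      have : (-1:ℤ)^(w+w) = 1 := by
        rw [← two_mul, pow_mul]; norm_num
      simp [this]
  · intro m hm hne
    have hmw : m < w := by simp at hm; omega
    have : coefc w m = 0 := by
      by_contra h
      exact absurd (coefc_ne_zero h) (by omega)
    simp [this]
  · intro h; simp at h

lemma coefc_eb (w b : ℕ) (hb : 1 ≤ b) :
    ∑ m ∈ range (w+1), (w.choose m : ℤ) * coefc w (b+m) = 0 := by
  rcases Nat.eq_zero_or_pos w with hw | hw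
  · subst hw
    simp [coefc, Nat.pos_iff_ne_zero.mp hb]
  · obtain ⟨b', rfl⟩ : ∃ b', b = b' + 1 := ⟨b - 1, by omega⟩
    have hc : ∀ m, coefc w (b'+1+m) = (-1:ℤ)^(b'+1+w) * ((-1:ℤ)^m * ((b'+m).choose (w-1) : ℤ)) := by
      intro m
      unfold coefc
      rw [if_neg (by omega), if_neg (by omega)]
      rw [show b'+1+m-1 = b'+m by omega, show b'+1+m+w = (b'+1+w)+m by omega, pow_add]
      ring
    calc ∑ m ∈ range (w+1), (w.choose m : ℤ) * coefc w (b'+1+m)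
        = (-1:ℤ)^(b'+1+w) * ∑ m ∈ range (w+1), (-1:ℤ)^m * (w.choose m) * ((b'+m).choose (w-1)) := by
          rw [Finset.mul_sum]
          refine Finset.sum_congr rfl fun m _ => ?_
          rw [hc]; ring
      _ = 0 := by rw [key_binom w hw b']; ring


def res (o : ∀ j, Fin (n j)) (B : Finset (Fin q)) (x : ∀ j, Fin (n j)) : ∀ j, Fin (n j) :=
  fun j => if j ∈ B then x j else o j

def pr (o : ∀ j, Fin (n j)) (S B : Finset (Fin q)) (f : (∀ j, Fin (n j)) → ℤ)
    (x : ∀ j, Fin (n j)) : ℤ :=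
  ∑ y : ∀ j, Fin (n j), if (∀ j ∈ B, y j = x j) ∧ (∀ j, j ∉ S → y j = o j) then f y else 0

lemma sum_collapseZ {α : Type*} [Fintype α] [DecidableEq α] (t : α) (E : Prop) [Decidable E]
    (P : α → Prop) [DecidablePred P] (v : α → ℤ) (hP : ∀ y, P y ↔ (y = t ∧ E)) :
    ∑ y, (if P y then v y else 0) = if E then v t else 0 := by
  by_cases hE : E
  · rw [Finset.sum_congr rfl (fun y _ => if_congr (by rw [hP y, and_iff_left hE]) rfl rfl),
      Finset.sum_ite_eq' univ t v]
    simp [hE]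
  · rw [if_neg hE]
    apply Finset.sum_eq_zero; intro y _
    rw [if_neg]; rw [hP]; tauto

lemma pr_congr (o : ∀ j, Fin (n j)) (S B : Finset (Fin q)) (f : (∀ j, Fin (n j)) → ℤ)
    {x x' : ∀ j, Fin (n j)} (h : ∀ j ∈ B, x j = x' j) : pr o S B f x = pr o S B f x' := by
  unfold pr
  refine Finset.sum_congr rfl fun y _ => if_congr (and_congr_left' ?_) rfl rfl
  constructor <;> intro hy j hj
  · rw [← h j hj]; exact hy j hj
  · rw [h j hj]; exact hy j hj

lemma pr_comp (o : ∀ j, Fin (n j)) (S B B' : Finset (Fin q)) (hB : B' ⊆ B)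
    (f : (∀ j, Fin (n j)) → ℤ) (x : ∀ j, Fin (n j)) :
    pr o B B' (pr o S B f) x = pr o S B' f x := by
  unfold pr
  have step1 : ∀ (y : ∀ j, Fin (n j)),
      (if (∀ j ∈ B', y j = x j) ∧ (∀ j, j ∉ B → y j = o j) then
        (∑ z : ∀ j, Fin (n j), if (∀ j ∈ B, z j = y j) ∧ (∀ j, j ∉ S → z j = o j) then f z else 0)
       else 0)
      = ∑ z : ∀ j, Fin (n j),
          if ((∀ j ∈ B', y j = x j) ∧ (∀ j, j ∉ B → y j = o j)) ∧
             ((∀ j ∈ B, z j = y j) ∧ (∀ j, j ∉ S → z j = o j)) then f z else 0 := by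
    intro y
    by_cases h : (∀ j ∈ B', y j = x j) ∧ (∀ j, j ∉ B → y j = o j)
    · rw [if_pos h]
      exact Finset.sum_congr rfl fun z _ => (if_congr (and_iff_right h).symm rfl rfl)
    · rw [if_neg h]; symm
      apply Finset.sum_eq_zero; intro z _
      rw [if_neg (fun hc => h hc.1)]
  rw [Finset.sum_congr rfl (fun y _ => step1 y), Finset.sum_comm]
  refine Finset.sum_congr rfl fun z _ => ?_
  apply sum_collapseZ (t := res o B z)
  intro y
  constructor
  · rintro ⟨⟨h1, h2⟩, ⟨h3, h4⟩⟩
    refine ⟨funext fun j => ?_, fun j hj => ?_, h4⟩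
    · unfold res; split_ifs with hj
      · exact (h3 j hj).symm
      · exact h2 j hj
    · rw [h3 j (hB hj)]; exact h1 j hj
  · rintro ⟨rfl, h5, h6⟩
    refine ⟨⟨fun j hj => ?_, fun j hj => ?_⟩, fun j hj => ?_, h6⟩
    · unfold res; rw [if_pos (hB hj)]; exact h5 j hj
    · unfold res; rw [if_neg hj]
    · unfold res; rw [if_pos hj]

lemma pr_self (o : ∀ j, Fin (n j)) (S : Finset (Fin q)) (f : (∀ j, Fin (n j)) → ℤ)
    (x : ∀ j, Fin (n j)) : pr o S S f x = f (res o S x) := by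
  unfold pr
  have := sum_collapseZ (t := res o S x) (E := True)
    (P := fun y => (∀ j ∈ S, y j = x j) ∧ (∀ j, j ∉ S → y j = o j)) (v := f) ?_
  · rw [this, if_pos trivial]
  · intro y
    simp only [and_true]
    constructor
    · rintro ⟨h1, h2⟩
      funext j; unfold res; split_ifs with hj
      · exact h1 j hj
      · exact h2 j hj
    · rintro rfl
      refine ⟨fun j hj => ?_, fun j hj => ?_⟩ <;> unfold res
      · rw [if_pos hj]
      · rw [if_neg hj]


def rngF (i : Fin p → Fin q) : Finset (Fin q) := Finset.image i Finset.univ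

lemma mem_rngF {i : Fin p → Fin q} {j : Fin q} : j ∈ rngF i ↔ ∃ k, i k = j := by
  simp [rngF]

lemma card_rngF {i : Fin p → Fin q} (hi : Function.Injective i) : (rngF i).card = p := by
  rw [rngF, Finset.card_image_of_injective _ hi, Finset.card_univ, Fintype.card_fin]

def fI (album : (i : Fin p → Fin q) → ((∀ k : Fin p, Fin (n (i k))) → ℤ))
    (i : Fin p → Fin q) : (∀ j, Fin (n j)) → ℤ :=
  fun y => album i (fun k => y (i k))

noncomputable def extV (o : ∀ j, Fin (n j)) (i : Fin p → Fin q)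
    (a : ∀ k, Fin (n (i k))) : ∀ j, Fin (n j) :=
  fun j => if h : ∃ k, i k = j then Fin.cast (congrArg n h.choose_spec) (a h.choose) else o j

lemma extV_apply (o : ∀ j, Fin (n j)) {i : Fin p → Fin q} (hi : Function.Injective i)
    (a : ∀ k, Fin (n (i k))) (k : Fin p) : extV o i a (i k) = a k := by
  unfold extV
  have hex : ∃ k', i k' = i k := ⟨k, rfl⟩
  rw [dif_pos hex]
  apply Fin.ext
  rw [Fin.coe_cast]
  exact congrArg (fun m => ((a m : ℕ))) (hi hex.choose_spec)

lemma extV_notMem (o : ∀ j, Fin (n j)) {i : Fin p → Fin q} (a : ∀ k, Fin (n (i k)))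
    {j : Fin q} (h : ¬ ∃ k, i k = j) : extV o i a j = o j := dif_neg h

lemma sum_pi_eq (o : ∀ j, Fin (n j)) {i : Fin p → Fin q} (hi : Function.Injective i)
    (F : (∀ k, Fin (n (i k))) → ℤ) :
    ∑ b : ∀ k, Fin (n (i k)), F b
      = ∑ y : ∀ j, Fin (n j), if (∀ j, j ∉ rngF i → y j = o j) then F (fun k => y (i k)) else 0 := by
  rw [← Finset.sum_filter]
  apply Finset.sum_nbij' (extV o i) (fun y k => y (i k))
  · intro b _
    rw [Finset.mem_filter]
    exact ⟨Finset.mem_univ _, fun j hj => extV_notMem o b (fun hc => hj (mem_rngF.mpr hc))⟩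
  · intro y _; exact Finset.mem_univ _
  · intro b _
    funext k; exact extV_apply o hi b k
  · intro y hy
    rw [Finset.mem_filter] at hy
    funext j
    by_cases h : ∃ k, i k = j
    · obtain ⟨k, rfl⟩ := h
      exact extV_apply o hi _ k
    · rw [extV_notMem o _ h, hy.2 j (fun hc => h (mem_rngF.mp hc))]
  · intro b _
    congr 1
    funext k
    rw [extV_apply o hi b k]

lemma bridge (o : ∀ j, Fin (n j)) {m : ℕ} {i : Fin p → Fin q} (hi : Function.Injective i)
    (album : (i : Fin p → Fin q) → ((∀ k : Fin p, Fin (n (i k))) → ℤ))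
    (r : Fin m → Fin p) (x : ∀ j, Fin (n j)) (v : Fin m → ℕ)
    (hv : ∀ k, v k = (x (i (r k)) : ℕ)) :
    (∑ b : ∀ k, Fin (n (i k)), if (∀ k, ((b (r k) : ℕ) = v k)) then album i b else 0)
      = pr o (rngF i) (rngF (fun k => i (r k))) (fI album i) x := by
  rw [sum_pi_eq o hi (fun b => if (∀ k, ((b (r k) : ℕ) = v k)) then album i b else 0)]
  unfold pr
  refine Finset.sum_congr rfl fun y _ => ?_
  have hiff : (∀ k, ((y (i (r k)) : ℕ) = v k)) ↔
      (∀ j ∈ rngF (fun k => i (r k)), y j = x j) := by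
    constructor
    · intro h j hj
      obtain ⟨k, rfl⟩ := mem_rngF.mp hj
      exact Fin.ext ((h k).trans (hv k))
    · intro h k
      rw [hv k]
      exact congrArg Fin.val (h _ (mem_rngF.mpr ⟨k, rfl⟩))
  by_cases hoff : (∀ j, j ∉ rngF i → y j = o j)
  · rw [if_pos hoff]
    by_cases hc : ∀ k, ((y (i (r k)) : ℕ) = v k)
    · rw [if_pos hc, if_pos ⟨hiff.mp hc, hoff⟩]
      rfl
    · rw [if_neg hc, if_neg (fun hh => hc (hiff.mpr hh.1))]
  · rw [if_neg hoff, if_neg (fun hh => hoff hh.2)]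


lemma rngF_orderEmbOfFin (S : Finset (Fin q)) (h : S.card = p) :
    rngF (⇑(S.orderEmbOfFin h)) = S := by
  apply Finset.coe_injective
  rw [rngF, Finset.coe_image, Finset.coe_univ, Set.image_univ, Finset.range_orderEmbOfFin]

lemma strictMono_eq_of_rngF_eq {i i' : Fin p → Fin q} (hi : StrictMono i) (hi' : StrictMono i')
    (h : rngF i = rngF i') : i = i' := by
  have hcard : (rngF i).card = p := card_rngF hi.injective
  have h1 := Finset.orderEmbOfFin_unique hcard
    (f := i) (fun k => mem_rngF.mpr ⟨k, rfl⟩) hi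
  have h2 := Finset.orderEmbOfFin_unique hcard
    (f := i') (fun k => by rw [h]; exact mem_rngF.mpr ⟨k, rfl⟩) hi'
  rw [h1, h2]

lemma chainL (o : ∀ j, Fin (n j))
    (album : (i : Fin p → Fin q) → ((∀ k : Fin p, Fin (n (i k))) → ℤ))
    (hreal : RealisticAlbum p q n album) :
    ∀ N : ℕ, ∀ i i' : Fin p → Fin q, StrictMono i → StrictMono i' →
      ((rngF i \ rngF i').card ≤ N) → ∀ B, B ⊆ rngF i → B ⊆ rngF i' →
      ∀ x, pr o (rngF i) B (fI album i) x = pr o (rngF i') B (fI album i') x := by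
  intro N
  induction N with
  | zero =>
    intro i i' hi hi' hcard B hB hB' x
    have hsub : rngF i ⊆ rngF i' := by
      rw [← Finset.sdiff_eq_empty_iff_subset]
      exact Finset.card_eq_zero.mp (le_antisymm hcard (Nat.zero_le _))
    obtain rfl : i = i' := strictMono_eq_of_rngF_eq hi hi'
      (Finset.eq_of_subset_of_card_le hsub
        (by rw [card_rngF hi'.injective, card_rngF hi.injective]))
    rfl
  | succ N ih =>
    intro i i' hi hi' hcard B hB hB' x
    by_cases heq : rngF i = rngF i'
    · obtain rfl : i = i' := strictMono_eq_of_rngF_eq hi hi' heq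
      rfl
    have hcards : (rngF i).card = (rngF i').card := by
      rw [card_rngF hi.injective, card_rngF hi'.injective]
    have hne : (rngF i \ rngF i').Nonempty := by
      rw [Finset.sdiff_nonempty]
      intro hsub
      exact heq (Finset.eq_of_subset_of_card_le hsub (le_of_eq hcards.symm))
    obtain ⟨t, ht⟩ := hne
    have hne' : (rngF i' \ rngF i).Nonempty := by
      rw [← Finset.card_pos, Finset.card_sdiff_comm hcards.symm, Finset.card_pos]
      exact ⟨t, ht⟩
    obtain ⟨u, hu⟩ := hne'
    rw [Finset.mem_sdiff] at ht hu
    have hp1 : 1 ≤ p := by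
      obtain ⟨k, _⟩ := mem_rngF.mp ht.1
      exact k.pos
    set D : Finset (Fin q) := rngF i \ {t} with hDdef
    have hDsub : D ⊆ rngF i := Finset.sdiff_subset
    have hDcard : D.card = p - 1 := by
      rw [hDdef, Finset.card_sdiff_of_subset (by simpa using ht.1), card_rngF hi.injective,
        Finset.card_singleton]
    have huD : u ∉ D := fun hc => hu.2 (hDsub hc)
    set S' : Finset (Fin q) := insert u D with hS'def
    have hS'card : S'.card = p := by
      rw [hS'def, Finset.card_insert_of_notMem huD, hDcard]
      omega
    set i'' : Fin p → Fin q := ⇑(S'.orderEmbOfFin hS'card) with hi''def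
    have hi''mono : StrictMono i'' := (S'.orderEmbOfFin hS'card).strictMono
    have hrng'' : rngF i'' = S' := rngF_orderEmbOfFin S' hS'card
    set d : Fin (p-1) → Fin q := ⇑(D.orderEmbOfFin hDcard) with hddef
    have hdD : ∀ k, d k ∈ D := fun k => Finset.orderEmbOfFin_mem D hDcard k
    have hdmono : StrictMono d := (D.orderEmbOfFin hDcard).strictMono
    have hrexists : ∀ k, ∃ k', i k' = d k := fun k => mem_rngF.mp (hDsub (hdD k))
    choose r hr using hrexists
    have hrmono : StrictMono r := fun k l hkl =>
      hi.lt_iff_lt.mp (by rw [hr, hr]; exact hdmono hkl)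
    have hsexists : ∀ k, ∃ k', i'' k' = d k := fun k =>
      mem_rngF.mp (by rw [hrng'']; exact Finset.mem_insert_of_mem (hdD k))
    choose s hs using hsexists
    have hsmono : StrictMono s := fun k l hkl =>
      hi''mono.lt_iff_lt.mp (by rw [hs, hs]; exact hdmono hkl)
    have hirs : ∀ k, i (r k) = i'' (s k) := fun k => by rw [hr, hs]
    have hDr : rngF (fun k => i (r k)) = D := by
      rw [show (fun k => i (r k)) = d from funext hr]
      exact rngF_orderEmbOfFin D hDcard
    have hDs : rngF (fun k => i'' (s k)) = D := by
      rw [show (fun k => i'' (s k)) = d from funext hs]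
      exact rngF_orderEmbOfFin D hDcard
    have keyAll : ∀ x0, pr o (rngF i) D (fI album i) x0 = pr o (rngF i'') D (fI album i'') x0 := by
      intro x0
      have key := hreal i i'' hi hi''mono r s hrmono hsmono hirs (fun k => x0 (i (r k)))
      have lhs_eq : (∑ b : ∀ k : Fin p, Fin (n (i k)),
            if ∀ k, b (r k) = x0 (i (r k)) then album i b else 0)
          = pr o (rngF i) (rngF (fun k => i (r k))) (fI album i) x0 := by
        rw [← bridge o hi.injective album r x0 (fun k => (x0 (i (r k)) : ℕ)) (fun k => rfl)]
        exact Finset.sum_congr rfl fun b _ =>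
          if_congr (forall_congr' fun k => Fin.ext_iff) rfl rfl
      have rhs_eq : (∑ c : ∀ k : Fin p, Fin (n (i'' k)),
            if ∀ k, ((c (s k) : ℕ) = ((x0 (i (r k)) : ℕ))) then album i'' c else 0)
          = pr o (rngF i'') (rngF (fun k => i'' (s k))) (fI album i'') x0 :=
        bridge o hi''mono.injective album s x0 (fun k => (x0 (i (r k)) : ℕ))
          (fun k => congrArg (fun j => (x0 j : ℕ)) (hirs k))
      rw [lhs_eq, rhs_eq, hDr, hDs] at key
      exact key
    have hBD : B ⊆ D := by
      intro j hj
      rw [hDdef, Finset.mem_sdiff]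
      refine ⟨hB hj, fun hc => ?_⟩
      rw [Finset.mem_singleton] at hc
      subst hc
      exact ht.2 (hB' hj)
    have hBS'' : B ⊆ rngF i'' := by
      rw [hrng'', hS'def]
      exact fun j hj => Finset.mem_insert_of_mem (hBD hj)
    have hcard'' : (rngF i'' \ rngF i').card ≤ N := by
      have hsub2 : rngF i'' \ rngF i' ⊆ (rngF i \ rngF i') \ {t} := by
        intro j hj
        rw [hrng''] at hj
        rw [Finset.mem_sdiff] at hj
        rcases Finset.mem_insert.mp hj.1 with hju | hjD
        · exact absurd (hju ▸ hu.1) hj.2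
        · rw [hDdef, Finset.mem_sdiff] at hjD
          rw [Finset.mem_sdiff, Finset.mem_sdiff]
          exact ⟨⟨hjD.1, hj.2⟩, hjD.2⟩
      have hts : t ∈ rngF i \ rngF i' := Finset.mem_sdiff.mpr ht
      have hlt : ((rngF i \ rngF i') \ {t}).card < (rngF i \ rngF i').card := by
        rw [Finset.card_sdiff_of_subset (by simpa using hts), Finset.card_singleton]
        have : 0 < (rngF i \ rngF i').card := Finset.card_pos.mpr ⟨t, hts⟩
        omega
      have := Finset.card_le_card hsub2
      omega
    calc pr o (rngF i) B (fI album i) x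
        = pr o D B (pr o (rngF i) D (fI album i)) x := (pr_comp o _ _ _ hBD _ x).symm
      _ = pr o D B (pr o (rngF i'') D (fI album i'')) x := by
          rw [show pr o (rngF i) D (fI album i) = pr o (rngF i'') D (fI album i'') from funext keyAll]
      _ = pr o (rngF i'') B (fI album i'') x := pr_comp o _ _ _ hBD _ x
      _ = pr o (rngF i') B (fI album i') x := ih i'' i' hi''mono hi' hcard'' B hBS'' hB' x


lemma exists_extend (hpq : p ≤ q) (B : Finset (Fin q)) (h : B.card ≤ p) :
    ∃ i : Fin p → Fin q, StrictMono i ∧ B ⊆ rngF i := by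
  obtain ⟨S, hBS, hcard⟩ := Finset.exists_superset_card_eq h (by simpa using hpq)
  exact ⟨⇑(S.orderEmbOfFin hcard), (S.orderEmbOfFin hcard).strictMono,
    by rw [rngF_orderEmbOfFin S hcard]; exact hBS⟩

noncomputable def margM (o : ∀ j, Fin (n j)) (hpq : p ≤ q)
    (album : (i : Fin p → Fin q) → ((∀ k : Fin p, Fin (n (i k))) → ℤ))
    (B : Finset (Fin q)) : (∀ j, Fin (n j)) → ℤ :=
  if h : B.card ≤ p then
    pr o (rngF (exists_extend hpq B h).choose) B (fI album (exists_extend hpq B h).choose)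
  else 0

lemma margM_eq (o : ∀ j, Fin (n j)) (hpq : p ≤ q)
    (album : (i : Fin p → Fin q) → ((∀ k : Fin p, Fin (n (i k))) → ℤ))
    (hreal : RealisticAlbum p q n album)
    {i : Fin p → Fin q} (hi : StrictMono i) {B : Finset (Fin q)} (hB : B ⊆ rngF i)
    (x : ∀ j, Fin (n j)) : pr o (rngF i) B (fI album i) x = margM o hpq album B x := by
  have h : B.card ≤ p := by
    have := Finset.card_le_card hB
    rwa [card_rngF hi.injective] at this
  simp only [margM]
  rw [dif_pos h]
  obtain ⟨hmono, hsub⟩ := (exists_extend hpq B h).choose_spec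
  exact chainL o album hreal _ i _ hi hmono le_rfl B hB hsub x

lemma margM_comp (o : ∀ j, Fin (n j)) (hpq : p ≤ q)
    (album : (i : Fin p → Fin q) → ((∀ k : Fin p, Fin (n (i k))) → ℤ))
    (hreal : RealisticAlbum p q n album) {B B' : Finset (Fin q)}
    (hsub : B' ⊆ B) (hle : B.card ≤ p) (x : ∀ j, Fin (n j)) :
    pr o B B' (margM o hpq album B) x = margM o hpq album B' x := by
  obtain ⟨hmono, hBsub⟩ := (exists_extend hpq B hle).choose_spec
  rw [show margM o hpq album B
      = pr o (rngF (exists_extend hpq B hle).choose) B (fI album (exists_extend hpq B hle).choose)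
    from by simp only [margM]; rw [dif_pos hle]]
  rw [pr_comp o _ _ _ hsub _ x]
  exact margM_eq o hpq album hreal hmono (hsub.trans hBsub) x

noncomputable def bigT (o : ∀ j, Fin (n j)) (hpq : p ≤ q)
    (album : (i : Fin p → Fin q) → ((∀ k : Fin p, Fin (n (i k))) → ℤ)) :
    (∀ j, Fin (n j)) → ℤ :=
  fun x => ∑ A : Finset (Fin q), coefc (q - p) A.card *
    (if ∀ j ∈ A, x j = o j then margM o hpq album Aᶜ x else 0)

lemma bigT_proj (o : ∀ j, Fin (n j)) (hpq : p ≤ q)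
    (album : (i : Fin p → Fin q) → ((∀ k : Fin p, Fin (n (i k))) → ℤ))
    (hreal : RealisticAlbum p q n album)
    {i : Fin p → Fin q} (hi : StrictMono i) (x : ∀ j, Fin (n j)) :
    pr o Finset.univ (rngF i) (bigT o hpq album) x = margM o hpq album (rngF i) x := by
  set w := q - p with hw
  set P := rngF i with hP
  have hPcard : P.card = p := card_rngF hi.injective
  have step1 : pr o Finset.univ P (bigT o hpq album) x
      = ∑ y : ∀ j, Fin (n j), if (∀ j ∈ P, y j = x j) then bigT o hpq album y else 0 := by
    unfold pr
    exact Finset.sum_congr rfl fun y _ => if_congr (by simp) rfl rfl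
  have step2 : ∀ y : ∀ j, Fin (n j), (if (∀ j ∈ P, y j = x j) then bigT o hpq album y else 0)
      = ∑ A : Finset (Fin q), coefc w A.card *
          (if (∀ j ∈ P, y j = x j) ∧ (∀ j ∈ A, y j = o j) then margM o hpq album Aᶜ y else 0) := by
    intro y
    unfold bigT
    by_cases hC : ∀ j ∈ P, y j = x j
    · rw [if_pos hC]
      refine Finset.sum_congr rfl fun A _ => ?_
      by_cases hD : ∀ j ∈ A, y j = o j
      · rw [if_pos hD, if_pos ⟨hC, hD⟩]
      · rw [if_neg hD, if_neg (fun hc => hD hc.2), mul_zero]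
    · rw [if_neg hC]
      symm; apply Finset.sum_eq_zero; intro A _
      rw [if_neg (fun hc => hC hc.1), mul_zero]
  rw [step1, Finset.sum_congr rfl (fun y _ => step2 y), Finset.sum_comm]
  have step3a : ∀ A : Finset (Fin q),
      (∑ y : ∀ j, Fin (n j),
        (if (∀ j ∈ P, y j = x j) ∧ (∀ j ∈ A, y j = o j) then margM o hpq album Aᶜ y else 0))
      = (if (∀ j ∈ A ∩ P, x j = o j) then pr o Aᶜ (P \ A) (margM o hpq album Aᶜ) x else 0) := by
    intro A
    by_cases hind : ∀ j ∈ A ∩ P, x j = o j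
    · rw [if_pos hind]
      unfold pr
      refine Finset.sum_congr rfl fun y _ => if_congr ?_ rfl rfl
      constructor
      · rintro ⟨h1, h2⟩
        refine ⟨fun j hj => h1 j (Finset.mem_sdiff.mp hj).1, fun j hj => h2 j ?_⟩
        rwa [Finset.mem_compl, not_not] at hj
      · rintro ⟨h1, h2⟩
        constructor
        · intro j hj
          by_cases hjA : j ∈ A
          · rw [h2 j (by rwa [Finset.mem_compl, not_not]),
              ← hind j (Finset.mem_inter.mpr ⟨hjA, hj⟩)]
          · exact h1 j (Finset.mem_sdiff.mpr ⟨hj, hjA⟩)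
        · intro j hj
          exact h2 j (by rwa [Finset.mem_compl, not_not])
    · rw [if_neg hind]
      apply Finset.sum_eq_zero; intro y _
      rw [if_neg]
      rintro ⟨h1, h2⟩
      exact hind (fun j hj =>
        by rw [← h1 j (Finset.mem_inter.mp hj).2, h2 j (Finset.mem_inter.mp hj).1])
  have step3 : ∀ A : Finset (Fin q),
      (∑ y : ∀ j, Fin (n j), coefc w A.card *
        (if (∀ j ∈ P, y j = x j) ∧ (∀ j ∈ A, y j = o j) then margM o hpq album Aᶜ y else 0))
      = coefc w A.card * (if (∀ j ∈ A ∩ P, x j = o j) then margM o hpq album (P \ A) x else 0) := by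
    intro A
    rw [← Finset.mul_sum, step3a A]
    by_cases hc : coefc w A.card = 0
    · rw [hc, zero_mul, zero_mul]
    · congr 1
      split_ifs with hind
      · have hwA : w ≤ A.card := coefc_ne_zero hc
        have hAcard : A.card ≤ q := le_trans (Finset.card_le_card (Finset.subset_univ A))
          (by rw [Finset.card_univ, Fintype.card_fin])
        have hwA2 : q - p ≤ A.card := hwA
        have hcard : Aᶜ.card ≤ p := by
          calc Aᶜ.card = q - A.card := by rw [Finset.card_compl, Fintype.card_fin]
            _ ≤ q - (q - p) := Nat.sub_le_sub_left hwA2 q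
            _ = p := Nat.sub_sub_self hpq
        exact margM_comp o hpq album hreal
          (fun j hj => Finset.mem_compl.mpr (Finset.mem_sdiff.mp hj).2) hcard x
      · rfl
  rw [Finset.sum_congr rfl (fun A _ => step3 A)]
  have step4 : (∑ A : Finset (Fin q), coefc w A.card *
        (if (∀ j ∈ A ∩ P, x j = o j) then margM o hpq album (P \ A) x else 0))
      = ∑ z ∈ P.powerset ×ˢ Pᶜ.powerset, coefc w (z.1.card + z.2.card) *
          (if (∀ j ∈ z.1, x j = o j) then margM o hpq album (P \ z.1) x else 0) := by
    refine Finset.sum_nbij' (fun A => (A ∩ P, A \ P)) (fun z => z.1 ∪ z.2) ?_ ?_ ?_ ?_ ?_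
    · intro A _
      rw [Finset.mem_product]
      exact ⟨Finset.mem_powerset.mpr Finset.inter_subset_right,
        Finset.mem_powerset.mpr (fun j hj => Finset.mem_compl.mpr (Finset.mem_sdiff.mp hj).2)⟩
    · intro z _; exact Finset.mem_univ _
    · intro A _
      ext j
      simp only [Finset.mem_union, Finset.mem_inter, Finset.mem_sdiff]
      tauto
    · intro z hz
      rw [Finset.mem_product] at hz
      have h1 := Finset.mem_powerset.mp hz.1
      have h2 := Finset.mem_powerset.mp hz.2
      have hd : ∀ j ∈ z.2, j ∉ P := fun j hj => Finset.mem_compl.mp (h2 hj)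
      refine Prod.ext ?_ ?_
      · ext j
        simp only [Finset.mem_inter, Finset.mem_union]
        constructor
        · rintro ⟨hj1 | hj2, hjP⟩
          · exact hj1
          · exact absurd hjP (hd j hj2)
        · intro hj; exact ⟨Or.inl hj, h1 hj⟩
      · ext j
        simp only [Finset.mem_sdiff, Finset.mem_union]
        constructor
        · rintro ⟨hj1 | hj2, hjP⟩
          · exact absurd (h1 hj1) hjP
          · exact hj2
        · intro hj; exact ⟨Or.inr hj, hd j hj⟩
    · intro A _
      have hps : P \ A = P \ (A ∩ P) := by
        ext j; simp only [Finset.mem_sdiff, Finset.mem_inter]; tauto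
      rw [Finset.card_inter_add_card_sdiff, ← hps]
  rw [step4, Finset.sum_product]
  have hWcard : Pᶜ.card = w := by
    rw [Finset.card_compl, Fintype.card_fin, hPcard]
  have step5 : ∀ B ∈ P.powerset, (∑ D ∈ Pᶜ.powerset, coefc w (B.card + D.card) *
        (if (∀ j ∈ B, x j = o j) then margM o hpq album (P \ B) x else 0))
      = (if (∀ j ∈ B, x j = o j) then margM o hpq album (P \ B) x else 0)
        * ∑ m ∈ Finset.range (w+1), (w.choose m : ℤ) * coefc w (B.card + m) := by
    intro B _
    rw [Finset.mul_sum]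
    rw [Finset.sum_powerset Pᶜ (fun D => coefc w (B.card + D.card) *
      (if (∀ j ∈ B, x j = o j) then margM o hpq album (P \ B) x else 0))]
    rw [show Pᶜ.card + 1 = w + 1 from by rw [hWcard]]
    refine Finset.sum_congr rfl fun m _ => ?_
    have := Finset.sum_powersetCard m Pᶜ (fun c => coefc w (B.card + c) *
      (if (∀ j ∈ B, x j = o j) then margM o hpq album (P \ B) x else 0))
    rw [this, hWcard, nsmul_eq_mul]
    push_cast
    ring
  rw [Finset.sum_congr rfl step5]
  rw [Finset.sum_eq_single ∅]
  · rw [if_pos (fun j hj => absurd hj (Finset.notMem_empty j))]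
    simp only [Finset.card_empty, zero_add]
    rw [coefc_e0 w, mul_one, Finset.sdiff_empty]
  · intro B _ hBne
    rw [coefc_eb w B.card (Finset.card_pos.mpr (Finset.nonempty_of_ne_empty hBne)), mul_zero]
  · intro h
    exact absurd (Finset.empty_mem_powerset P) h

end RealisableAux

/-- Every realistic `(p, n)`-album of pictures is realisable. -/
theorem realistic_implies_realisable (p q : ℕ) (hp : 0 < p) (hq : 0 < q)
    (n : Fin q → ℕ) (hn : ∀ j, 0 < n j)
    (album : (i : Fin p → Fin q) → ((∀ k : Fin p, Fin (n (i k))) → ℤ))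
    (hreal : RealisticAlbum p q n album) :
    RealisableAlbum p q n album := by
  by_cases hpq : p ≤ q
  · classical
    set o : ∀ j : Fin q, Fin (n j) := fun j => ⟨0, hn j⟩ with ho
    refine ⟨bigT o hpq album, fun i hi a => ?_⟩
    set x := extV o i a with hx
    have hrhs : (∑ b : ∀ j : Fin q, Fin (n j),
          if ∀ k, b (i k) = a k then bigT o hpq album b else 0)
        = pr o Finset.univ (rngF i) (bigT o hpq album) x := by
      unfold pr
      refine Finset.sum_congr rfl fun b _ => if_congr ?_ rfl rfl
      constructor
      · intro h
        refine ⟨fun j hj => ?_, fun j hj => absurd (Finset.mem_univ j) hj⟩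
        obtain ⟨k, rfl⟩ := mem_rngF.mp hj
        rw [h k]
        exact (extV_apply o hi.injective a k).symm
      · rintro ⟨h, -⟩ k
        rw [h (i k) (mem_rngF.mpr ⟨k, rfl⟩)]
        exact extV_apply o hi.injective a k
    rw [hrhs, bigT_proj o hpq album hreal hi x,
      ← margM_eq o hpq album hreal hi (Finset.Subset.refl (rngF i)) x,
      pr_self o (rngF i) (fI album i) x]
    unfold fI
    congr 1
    funext k
    rw [show res o (rngF i) x (i k) = x (i k) from if_pos (mem_rngF.mpr ⟨k, rfl⟩)]
    exact (extV_apply o hi.injective a k).symm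
  · refine ⟨0, fun i hi a => absurd ?_ hpq⟩
    have := Fintype.card_le_of_injective i hi.injective
    simpa using this
end

section
/- Let p, q ∈ ℕ, let ℓ be a permutation of [q], and let n ∈ ℕ^q. If every realistic (p, n∘ℓ)-album of pictures is realisable, then every realistic (p, n)-album of pictures is realisable. In other words, the property 'realistic implies realisable' for albums is invariant under permuting the modes of the ambient tensor shape. -/
/-!
A picture of the rotated album on a set `S` of modes of `n ∘ ℓ` is the picture of the original
album on `ℓ(S)`, with its axes reordered increasingly. To make this reordering harmless, an album
is extended to all injective tuples by reading the picture at the sorted rearrangement of a tuple.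
Marginals are invariant under simultaneously permuting the axes and the constrained positions, so
the extension is still consistent on overlaps, and a tensor realising the rotated album, with its
modes permuted back, realises the original one.
-/

open Function Equiv Tuple

lemma StrictMono.of_comp_left {α β γ : Type*} [Preorder α] [LinearOrder β] [Preorder γ]
    {g : β → γ} {f : α → β} (hg : StrictMono g) (h : StrictMono (g ∘ f)) : StrictMono f :=
  fun _ _ hab => hg.lt_iff_lt.1 (h hab)

lemma Tuple.strictMono_comp_sort {m : ℕ} {α : Type*} [LinearOrder α] {f : Fin m → α}
    (hf : Injective f) : StrictMono (f ∘ sort f) :=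
  (monotone_sort f).strictMono_of_injective (hf.comp (sort f).injective)

lemma Tuple.strictMono_sort_symm_comp {m r : ℕ} {α : Type*} [LinearOrder α] {f : Fin m → α}
    (hf : Injective f) {x : Fin r → Fin m} (h : StrictMono (f ∘ x)) :
    StrictMono ((sort f).symm ∘ x) :=
  (strictMono_comp_sort hf).of_comp_left (by simpa [comp_def] using h)

section Margin

variable {ι M : Type*} [Fintype ι] [DecidableEq ι] [AddCommMonoid M] {d : ι → ℕ} {m : ℕ}

-- Coordinates are compared in `ℕ`, so `a` need not be typed by `d ∘ x`.
def margin (P : (∀ k, Fin (d k)) → M) (x : Fin m → ι) (a : Fin m → ℕ) : M :=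
  ∑ b, if ∀ k, (b (x k) : ℕ) = a k then P b else 0

lemma margin_comp_perm (τ : Perm ι) (P : (∀ k, Fin (d (τ k))) → M) (x : Fin m → ι)
    (a : Fin m → ℕ) :
    margin (fun b : ∀ k, Fin (d k) => P fun k => b (τ k)) x a = margin P (τ.symm ∘ x) a := by
  unfold margin
  refine Fintype.sum_equiv (piCongrLeft (fun k => Fin (d k)) τ).symm _ _ fun b => ?_
  refine if_congr (forall_congr' fun k => ?_) rfl rfl
  have hb : ∀ y, (b (τ (τ.symm y)) : ℕ) = b y := fun y =>
    congrArg (fun z => (b z : ℕ)) (apply_symm_apply τ y)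
  simp only [piCongrLeft_symm_apply, comp_apply, hb]

lemma margin_comp_perm_positions (ρ : Perm (Fin m)) (P : (∀ k, Fin (d k)) → M) (x : Fin m → ι)
    (a : Fin m → ℕ) : margin P (x ∘ ρ) (a ∘ ρ) = margin P x a := by
  unfold margin
  exact Fintype.sum_congr _ _ fun b =>
    if_congr (ρ.forall_congr_right (q := fun k => (b (x k) : ℕ) = a k)) rfl rfl

lemma margin_eq_zero_of_le (P : (∀ k, Fin (d k)) → M) {x : Fin m → ι} {a : Fin m → ℕ}
    {k : Fin m} (hk : d (x k) ≤ a k) : margin P x a = 0 :=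
  Finset.sum_eq_zero fun b _ => if_neg fun h => by have := (b (x k)).is_lt; have := h k; omega

end Margin

abbrev Album (p q : ℕ) (n : Fin q → ℕ) :=
  (i : Fin p → Fin q) → ((∀ k : Fin p, Fin (n (i k))) → ℤ)

section Albums

variable {p q : ℕ} {n : Fin q → ℕ}

lemma realisticAlbum_iff_margin (A : Album p q n) : RealisticAlbum p q n A ↔
    ∀ i j : Fin p → Fin q, StrictMono i → StrictMono j →
    ∀ r s : Fin (p - 1) → Fin p, StrictMono r → StrictMono s → (∀ k, i (r k) = j (s k)) →
    ∀ a, margin (A i) r a = margin (A j) s a := by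
  constructor
  · intro hA i j hi hj r s hr hs hrs a
    by_cases ha : ∀ k, a k < n (i (r k))
    · simpa [margin, Fin.ext_iff] using hA i j hi hj r s hr hs hrs fun k => ⟨a k, ha k⟩
    · push Not at ha
      obtain ⟨k, hk⟩ := ha
      rw [margin_eq_zero_of_le _ hk, margin_eq_zero_of_le _ (k := k) (by rwa [← hrs k])]
  · intro hA i j hi hj r s hr hs hrs a
    simpa [margin, Fin.ext_iff] using hA i j hi hj r s hr hs hrs fun k => a k

lemma realisableAlbum_iff_margin (A : Album p q n) : RealisableAlbum p q n A ↔
    ∃ T : (∀ j, Fin (n j)) → ℤ, ∀ i, StrictMono i → ∀ a, A i a = margin T i fun k => a k := by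
  simp only [RealisableAlbum, margin, Fin.ext_iff]

namespace Album

lemma apply_congr (A : Album p q n) {i j : Fin p → Fin q} (h : i = j)
    (a : ∀ k, Fin (n (i k))) (c : ∀ k, Fin (n (j k))) (hac : ∀ k, (a k : ℕ) = c k) :
    A i a = A j c := by
  subst h
  congr 1
  exact funext fun k => Fin.ext (hac k)

def extendBySort (A : Album p q n) : Album p q n :=
  fun f a => A (f ∘ sort f) fun m => a (sort f m)

lemma extendBySort_eq (A : Album p q n) {f g : Fin p → Fin q} (hf : Injective f)
    (hg : StrictMono g) (σ : Perm (Fin p)) (hfg : ∀ k, f k = g (σ k))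
    (a : ∀ k, Fin (n (f k))) (c : ∀ k, Fin (n (g k))) (hac : ∀ k, (a k : ℕ) = c (σ k)) :
    A.extendBySort f a = A g c := by
  have hsorted : σ * sort f = 1 := by
    refine (Perm.monotone_iff _).1 (StrictMono.monotone (hg.of_comp_left ?_))
    convert strictMono_comp_sort hf using 1
    exact funext fun k => (hfg _).symm
  have hσ : ∀ k, σ (sort f k) = k := fun k => congrFun (congrArg DFunLike.coe hsorted) k
  refine A.apply_congr (funext fun k => ?_) _ _ fun k => ?_
  · simp only [comp_apply, hfg, hσ]
  · rw [hac, hσ]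

lemma margin_extendBySort {m : ℕ} (A : Album p q n) (f : Fin p → Fin q) (r : Fin m → Fin p)
    (a : Fin m → ℕ) (ρ : Perm (Fin m)) :
    margin (A.extendBySort f) r a = margin (A (f ∘ sort f)) ((sort f).symm ∘ r ∘ ρ) (a ∘ ρ) :=
  (margin_comp_perm (d := fun j => n (f j)) (sort f) (A (f ∘ sort f)) r a).trans
    (margin_comp_perm_positions ρ _ _ a).symm

lemma margin_extendBySort_eq {A : Album p q n} (hA : RealisticAlbum p q n A)
    {f g : Fin p → Fin q} (hf : Injective f) (hg : Injective g) {r s : Fin (p - 1) → Fin p}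
    (hr : Injective r) (hrs : ∀ k, f (r k) = g (s k)) (a : Fin (p - 1) → ℕ) :
    margin (A.extendBySort f) r a = margin (A.extendBySort g) s a := by
  set ρ := sort (f ∘ r)
  have hfr : StrictMono (f ∘ r ∘ ρ) := strictMono_comp_sort (hf.comp hr)
  have hgs : StrictMono (g ∘ s ∘ ρ) := by
    convert hfr using 1
    exact funext fun k => (hrs _).symm
  rw [A.margin_extendBySort f r a ρ, A.margin_extendBySort g s a ρ]
  refine (realisticAlbum_iff_margin A).1 hA _ _ (strictMono_comp_sort hf)
    (strictMono_comp_sort hg) _ _ (strictMono_sort_symm_comp hf hfr)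
    (strictMono_sort_symm_comp hg hgs) (fun k => ?_) _
  simp [hrs]

lemma extendBySort_eq_margin {B : Album p q n} {T : (∀ j, Fin (n j)) → ℤ}
    (hT : ∀ i, StrictMono i → ∀ a, B i a = margin T i fun k => a k) {g : Fin p → Fin q}
    (hg : Injective g) (x : ∀ k, Fin (n (g k))) :
    B.extendBySort g x = margin T g fun k => x k := by
  rw [extendBySort, hT _ (strictMono_comp_sort hg)]
  exact margin_comp_perm_positions (sort g) T g fun k => x k

def rotate (ℓ : Perm (Fin q)) (A : Album p q n) : Album p q (n ∘ ℓ) :=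
  fun i => A.extendBySort (ℓ ∘ i)

end Album

theorem RealisticAlbum.rotate {A : Album p q n} (hA : RealisticAlbum p q n A)
    (ℓ : Perm (Fin q)) : RealisticAlbum p q (n ∘ ℓ) (A.rotate ℓ) := by
  rw [realisticAlbum_iff_margin]
  intro i j hi hj r s hr hs hrs a
  exact Album.margin_extendBySort_eq hA (ℓ.injective.comp hi.injective)
    (ℓ.injective.comp hj.injective) hr.injective (fun k => congrArg ℓ (hrs k)) a

theorem RealisableAlbum.of_rotate {A : Album p q n} {ℓ : Perm (Fin q)}
    (h : RealisableAlbum p q (n ∘ ℓ) (A.rotate ℓ)) : RealisableAlbum p q n A := by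
  obtain ⟨T, hT⟩ := (realisableAlbum_iff_margin _).1 h
  refine (realisableAlbum_iff_margin A).2 ⟨fun b => T fun j => b (ℓ j), fun i hi a => ?_⟩
  have hi' : Injective (ℓ.symm ∘ i) := ℓ.symm.injective.comp hi.injective
  let x : ∀ k, Fin ((n ∘ ℓ) (ℓ.symm (i k))) := fun k => Fin.cast (by simp) (a k)
  calc A i a = (A.rotate ℓ).extendBySort (ℓ.symm ∘ i) x :=
        (A.extendBySort_eq (f := ℓ ∘ (ℓ.symm ∘ i) ∘ sort (ℓ.symm ∘ i))
          (ℓ.injective.comp (hi'.comp (sort _).injective)) hi (sort (ℓ.symm ∘ i))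
          (fun k => by simp) (fun k => x (sort _ k)) a fun _ => rfl).symm
    _ = margin T (ℓ.symm ∘ i) fun k => x k := Album.extendBySort_eq_margin hT hi' x
    _ = margin (fun b => T fun j => b (ℓ j)) i fun k => a k := (margin_comp_perm ℓ T i _).symm

end Albums

theorem rotating_preserves_realisability_general (p q : ℕ)
    (ℓ : Equiv.Perm (Fin q)) (n : Fin q → ℕ)
    (hperm : ∀ album' : (i : Fin p → Fin q) → ((∀ k : Fin p, Fin ((n ∘ ℓ) (i k))) → ℤ),
      RealisticAlbum p q (n ∘ ℓ) album' → RealisableAlbum p q (n ∘ ℓ) album') :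
    ∀ album : (i : Fin p → Fin q) → ((∀ k : Fin p, Fin (n (i k))) → ℤ),
      RealisticAlbum p q n album → RealisableAlbum p q n album :=
  fun _ hA => (hperm _ (hA.rotate ℓ)).of_rotate

/-- Rotating the ambient shape by a permutation `ℓ` of the modes preserves the property
"every realistic album is realisable": if every realistic `(p, n ∘ ℓ)`-album is
realisable, then every realistic `(p, n)`-album is realisable. -/
theorem rotating_preserves_realisability (p q : ℕ) (hp : 0 < p) (hq : 0 < q)
    (ℓ : Equiv.Perm (Fin q)) (n : Fin q → ℕ) (hn : ∀ j, 0 < n j)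
    (hperm : ∀ album' : (i : Fin p → Fin q) → ((∀ k : Fin p, Fin ((n ∘ ℓ) (i k))) → ℤ),
      RealisticAlbum p q (n ∘ ℓ) album' → RealisableAlbum p q (n ∘ ℓ) album') :
    ∀ album : (i : Fin p → Fin q) → ((∀ k : Fin p, Fin (n (i k))) → ℤ),
      RealisticAlbum p q n album → RealisableAlbum p q n album :=
  rotating_preserves_realisability_general p q ℓ n hperm
end
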